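/- arXiv:1902.01575 — 2 statements merged into one kernel-verified Lean document; each statement's English description precedes it below -/
import Mathlib

section
/- Let K ≥ 1 be an integer, α ∈ (0,1], and set M = ⌊K/α⌋ (so M ≥ K). Let A : ℕ → ℕ be any sequence such that for every u ≥ 1, if the residue of u modulo M (taken in {1,…,M}) belongs to {1,…,K}, then A_u equals that residue. Then for every arm index i ∈ {1,…,K} with i < M and every pair of instants s ≤ t in ℕ, the number of indices u with s < u ≤ t and A_u = i is at least ⌊(α/K)(t−s)⌋. -/
/-!
Arm `i` is forced at every `u ≡ i [MOD M]`, and `(s, t]` contains at least `⌊(t - s) / M⌋`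
such instants. Since `M = ⌊K / α⌋ ≤ K / α`, we have `α / K ≤ 1 / M`, so this count is at
least `⌊(α / K) (t - s)⌋`.
-/

open Finset

def residueIn (u M : ℕ) : ℕ := if u % M = 0 then M else u % M

theorem residueIn_of_mod_eq {u M i : ℕ} (hi : 0 < i) (hu : u % M = i) : residueIn u M = i := by
  rw [residueIn, if_neg (by omega), hu]

theorem Nat.div_le_card_Ioc_filter_modEq {M : ℕ} (hM : 0 < M) (v s t : ℕ) :
    (t - s) / M ≤ #{x ∈ Ioc s t | x ≡ v [MOD M]} := by
  rcases le_total t s with hts | hst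
  · simp [Nat.sub_eq_zero_of_le hts]
  have hsplit : ((t : ℚ) - v) / M = (s - v) / M + ((t - s : ℕ) : ℚ) / M := by
    push_cast [hst]; ring
  have hquot : (((t - s) / M : ℕ) : ℤ) = ⌊((t - s : ℕ) : ℚ) / M⌋ := by
    rw [Int.floor_div_natCast, Int.floor_natCast, Int.natCast_div]
  rw [← Int.ofNat_le, Nat.Ioc_filter_modEq_card s t hM v, hsplit, hquot]
  exact le_max_of_le_left (le_sub_iff_add_le'.mpr (Int.le_floor_add _ _))

theorem Nat.floor_div_mul_le_div_floor {K : ℕ} {α : ℝ} (hα : 0 < α)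
    (hM : 0 < ⌊(K : ℝ) / α⌋₊) (n : ℕ) : ⌊α / K * n⌋₊ ≤ n / ⌊(K : ℝ) / α⌋₊ := by
  have hMle : (⌊(K : ℝ) / α⌋₊ : ℝ) ≤ K / α := Nat.floor_le (by positivity)
  have hrate : α / K ≤ (⌊(K : ℝ) / α⌋₊ : ℝ)⁻¹ := by
    simpa only [inv_div] using inv_anti₀ (by exact_mod_cast hM) hMle
  calc ⌊α / K * n⌋₊ ≤ ⌊(n : ℝ) / ⌊(K : ℝ) / α⌋₊⌋₊ := by
        rw [div_eq_inv_mul (n : ℝ)]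
        gcongr
    _ = n / ⌊(K : ℝ) / α⌋₊ := Nat.floor_div_eq_div _ _

theorem forced_exploration_general
    (K : ℕ) (α : ℝ) (hα0 : 0 < α)
    (M : ℕ) (hM : M = ⌊(K : ℝ) / α⌋₊)
    (A : ℕ → ℕ)
    (hA : ∀ u : ℕ, 1 ≤ u → residueIn u M ≤ K → A u = residueIn u M)
    (i : ℕ) (hi1 : 1 ≤ i) (hiK : i ≤ K) (hiM : i < M)
    (s t : ℕ) :
    ⌊(α / K) * ((t - s : ℕ) : ℝ)⌋₊ ≤ ((Ioc s t).filter (fun u => A u = i)).card := by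
  have hM0 : 0 < M := by omega
  have hforced : ∀ u ∈ Ioc s t, u ≡ i [MOD M] → A u = i := by
    intro u hu hmod
    have hres : residueIn u M = i := residueIn_of_mod_eq hi1 (Eq.trans hmod (Nat.mod_eq_of_lt hiM))
    rw [hA u (by grind) (hres ▸ hiK), hres]
  calc ⌊(α / K) * ((t - s : ℕ) : ℝ)⌋₊ ≤ (t - s) / M :=
        hM ▸ Nat.floor_div_mul_le_div_floor hα0 (hM ▸ hM0) _
    _ ≤ #{u ∈ Ioc s t | u ≡ i [MOD M]} := Nat.div_le_card_Ioc_filter_modEq hM0 i s t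
    _ ≤ #{u ∈ Ioc s t | A u = i} := card_le_card (monotone_filter_right _ hforced)

/-- **Proposition 1 (forced exploration).**
Let `K ≥ 1`, `α ∈ (0,1]`, `M = ⌊K/α⌋`. If `A : ℕ → ℕ` plays arm `residueIn u M`
whenever this residue belongs to `{1,…,K}`, then for every arm `i ∈ {1,…,K}` with
`i < M` and all instants `s ≤ t`, the number of `u ∈ (s, t]` with `A u = i` is at
least `⌊(α/K)(t−s)⌋`. -/
theorem forced_exploration
    (K : ℕ) (hK : 1 ≤ K) (α : ℝ) (hα0 : 0 < α) (hα1 : α ≤ 1)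
    (M : ℕ) (hM : M = ⌊(K : ℝ) / α⌋₊)
    (A : ℕ → ℕ)
    (hA : ∀ u : ℕ, 1 ≤ u → residueIn u M ≤ K → A u = residueIn u M)
    (i : ℕ) (hi1 : 1 ≤ i) (hiK : i ≤ K) (hiM : i < M)
    (s t : ℕ) (hst : s ≤ t) :
    ⌊(α / K) * ((t - s : ℕ) : ℝ)⌋₊ ≤ ((Ioc s t).filter (fun u => A u = i)).card :=
  forced_exploration_general K α hα0 M hM A hA i hi1 hiK hiM s t
end

section
/- Let x, y ∈ [0,1] and let s, r > 0 be real numbers, and set m = (s x + r y)/(s + r). Then s·kl(x,m) + r·kl(y,m) = inf over λ ∈ [0,1] of [ s·kl(x,λ) + r·kl(y,λ) ]; in particular the weighted average m minimizes λ ↦ s·kl(x,λ) + r·kl(y,λ). -/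
/-- The binary relative entropy `kl(x,y)` with values in the extended reals:
`kl(x,y) = x ln(x/y) + (1−x) ln((1−x)/(1−y))` (conventions `0·ln 0 = 0`,
`0·ln(0/0) = 0`), and `kl(x,y) = +∞` when `y ∈ {0,1}` and `x ≠ y`. -/
noncomputable def klBernE (x y : ℝ) : EReal :=
  if (y = 0 ∨ y = 1) ∧ x ≠ y then ⊤
  else ((x * Real.log (x / y) + (1 - x) * Real.log ((1 - x) / (1 - y)) : ℝ) : EReal)

/-- Real-valued binary relative entropy expression. -/
noncomputable def klR (x y : ℝ) : ℝ :=
  x * Real.log (x / y) + (1 - x) * Real.log ((1 - x) / (1 - y))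

lemma klR_term_lb {t u : ℝ} (ht : 0 ≤ t) (hu : 0 < u) :
    t - u ≤ t * Real.log (t / u) := by
  rcases eq_or_lt_of_le ht with h | h
  · simp [← h]
    exact hu.le
  · have h1 : Real.log (u / t) ≤ u / t - 1 := Real.log_le_sub_one_of_pos (by positivity)
    have h2 : Real.log (t / u) = - Real.log (u / t) := by
      rw [← Real.log_inv]
      congr 1
      field_simp
    have h3 : t * Real.log (u / t) ≤ t * (u / t - 1) :=
      mul_le_mul_of_nonneg_left h1 h.le
    have h4 : t * (u / t - 1) = u - t := by field_simp
    rw [h2]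
    nlinarith

lemma klR_nonneg {x y : ℝ} (hx : x ∈ Set.Icc (0:ℝ) 1) (hy : y ∈ Set.Ioo (0:ℝ) 1) :
    0 ≤ klR x y := by
  have h1 := klR_term_lb hx.1 hy.1
  have h2 := klR_term_lb (t := 1 - x) (u := 1 - y) (by linarith [hx.2]) (by linarith [hy.2])
  unfold klR
  linarith

lemma mul_log_split {x m l : ℝ} (hx : 0 ≤ x) (hm : 0 < m) (hl : 0 < l) :
    x * Real.log (x / l) = x * Real.log (x / m) + x * Real.log (m / l) := by
  rcases eq_or_lt_of_le hx with h | h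
  · simp [← h]
  · have hxl : x / l = (x / m) * (m / l) := by field_simp
    rw [hxl, Real.log_mul (by positivity) (by positivity), mul_add]

lemma klR_identity {x y s r m l : ℝ} (hx : x ∈ Set.Icc (0:ℝ) 1) (hy : y ∈ Set.Icc (0:ℝ) 1)
    (hs : 0 < s) (hr : 0 < r) (hm : m = (s * x + r * y) / (s + r))
    (hm' : m ∈ Set.Ioo (0:ℝ) 1) (hl : l ∈ Set.Ioo (0:ℝ) 1) :
    s * klR x l + r * klR y l = s * klR x m + r * klR y m + (s + r) * klR m l := by
  have hsr : 0 < s + r := by linarith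
  have hsum : s * x + r * y = (s + r) * m := by
    rw [hm]; field_simp
  have hsum2 : s * (1 - x) + r * (1 - y) = (s + r) * (1 - m) := by
    nlinarith [hsum]
  have e1 := mul_log_split hx.1 hm'.1 hl.1
  have e2 := mul_log_split (x := 1 - x) (m := 1 - m) (l := 1 - l)
    (by linarith [hx.2]) (by linarith [hm'.2]) (by linarith [hl.2])
  have e3 := mul_log_split hy.1 hm'.1 hl.1
  have e4 := mul_log_split (x := 1 - y) (m := 1 - m) (l := 1 - l)
    (by linarith [hy.2]) (by linarith [hm'.2]) (by linarith [hl.2])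
  unfold klR
  linear_combination s * e1 + s * e2 + r * e3 + r * e4
    + Real.log (m / l) * hsum + Real.log ((1 - m) / (1 - l)) * hsum2

lemma klBernE_of_Ioo {x y : ℝ} (hy : y ∈ Set.Ioo (0:ℝ) 1) :
    klBernE x y = ((klR x y : ℝ) : EReal) := by
  rw [klBernE, if_neg]
  · rfl
  · rintro ⟨h | h, _⟩
    · exact hy.1.ne' h
    · exact hy.2.ne h

lemma klBernE_nonneg {x y : ℝ} (hx : x ∈ Set.Icc (0:ℝ) 1) (hy : y ∈ Set.Icc (0:ℝ) 1) :
    0 ≤ klBernE x y := by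
  rw [klBernE]
  split_ifs with h
  · exact le_top
  · push_neg at h
    rcases eq_or_lt_of_le hy.1 with h0 | h0
    · have hxy : x = y := h (Or.inl h0.symm)
      rw [hxy, ← h0]
      norm_num
    · rcases eq_or_lt_of_le hy.2 with h1 | h1
      · have hxy : x = y := h (Or.inr h1)
        rw [hxy, h1]
        norm_num
      · exact_mod_cast klR_nonneg hx ⟨h0, h1⟩

lemma klBernE_ne_bot (x y : ℝ) : klBernE x y ≠ ⊥ := by
  rw [klBernE]
  split_ifs
  · exact (by simp : (⊤:EReal) ≠ ⊥)
  · exact EReal.coe_ne_bot _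

/-- **The pooled mean minimizes the weighted sum of binary relative entropies**
(first key observation in the proof of Lemma 1 of the paper): for `x, y ∈ [0,1]`
and weights `s, r > 0`, with `m = (sx + ry)/(s + r)`,
`s·kl(x,m) + r·kl(y,m) = inf_{λ ∈ [0,1]} [ s·kl(x,λ) + r·kl(y,λ) ]`. -/
theorem klBern_pooled_mean_inf
    (x y : ℝ) (hx : x ∈ Set.Icc (0 : ℝ) 1) (hy : y ∈ Set.Icc (0 : ℝ) 1)
    (s r : ℝ) (hs : 0 < s) (hr : 0 < r)
    (m : ℝ) (hm : m = (s * x + r * y) / (s + r)) :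
    (s : EReal) * klBernE x m + (r : EReal) * klBernE y m
      = ⨅ l ∈ Set.Icc (0 : ℝ) 1, ((s : EReal) * klBernE x l + (r : EReal) * klBernE y l) := by
  have hsr : 0 < s + r := by linarith
  have hmIcc : m ∈ Set.Icc (0:ℝ) 1 := by
    rw [hm]
    constructor
    · apply div_nonneg _ hsr.le
      nlinarith [mul_nonneg hs.le hx.1, mul_nonneg hr.le hy.1]
    · rw [div_le_one hsr]
      nlinarith [mul_le_mul_of_nonneg_left hx.2 hs.le, mul_le_mul_of_nonneg_left hy.2 hr.le]
  apply le_antisymm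
  · apply le_iInf₂
    intro l hl
    by_cases hm0 : m = 0
    · -- then x = y = 0 and LHS = 0
      have hnum : s * x + r * y = 0 := by
        have := hm0 ▸ hm
        field_simp at this
        linarith
      have hx0 : x = 0 := le_antisymm
        (by nlinarith [mul_nonneg hr.le hy.1]) hx.1
      have hy0 : y = 0 := le_antisymm
        (by nlinarith [mul_nonneg hs.le hx.1]) hy.1
      have h00 : klBernE 0 0 = (0 : EReal) := by
        rw [klBernE, if_neg (by simp)]
        norm_num
      rw [hx0, hy0, hm0, h00]
      simp only [mul_zero, add_zero, zero_add]
      exact add_nonneg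
        (mul_nonneg (EReal.coe_nonneg.mpr hs.le)
          (klBernE_nonneg (by norm_num) hl))
        (mul_nonneg (EReal.coe_nonneg.mpr hr.le)
          (klBernE_nonneg (by norm_num) hl))
    · by_cases hm1 : m = 1
      · have hnum : s * x + r * y = s + r := by
          have h1 : (s * x + r * y) / (s + r) = 1 := by rw [← hm, hm1]
          field_simp at h1
          linarith
        have hx1 : x = 1 := le_antisymm hx.2
          (by nlinarith [mul_le_mul_of_nonneg_left hy.2 hr.le])
        have hy1 : y = 1 := le_antisymm hy.2
          (by nlinarith [mul_le_mul_of_nonneg_left hx.2 hs.le])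
        have h11 : klBernE 1 1 = (0 : EReal) := by
          rw [klBernE, if_neg (by simp)]
          norm_num
        rw [hx1, hy1, hm1, h11]
        simp only [mul_zero, add_zero, zero_add]
        exact add_nonneg
          (mul_nonneg (EReal.coe_nonneg.mpr hs.le)
            (klBernE_nonneg (by norm_num) hl))
          (mul_nonneg (EReal.coe_nonneg.mpr hr.le)
            (klBernE_nonneg (by norm_num) hl))
      · -- main case : m ∈ Ioo 0 1
        have hmIoo : m ∈ Set.Ioo (0:ℝ) 1 :=
          ⟨lt_of_le_of_ne hmIcc.1 (Ne.symm hm0), lt_of_le_of_ne hmIcc.2 hm1⟩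
        have hLHS : (s : EReal) * klBernE x m + (r : EReal) * klBernE y m
            = (((s * klR x m + r * klR y m : ℝ)) : EReal) := by
          rw [klBernE_of_Ioo hmIoo, klBernE_of_Ioo hmIoo, EReal.coe_add,
            EReal.coe_mul, EReal.coe_mul]
        rw [hLHS]
        rcases eq_or_lt_of_le hl.1 with hl0 | hl0
        · -- l = 0 : RHS is ⊤
          have hne : x ≠ l ∨ y ≠ l := by
            by_contra h
            push_neg at h
            apply hm0
            rw [hm, h.1, h.2, ← hl0]
            simp
          have htop : (s : EReal) * klBernE x l + (r : EReal) * klBernE y l = ⊤ := by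
            rcases hne with hne | hne
            · have h1 : klBernE x l = ⊤ := by
                rw [klBernE, if_pos ⟨Or.inl hl0.symm, hne⟩]
              rw [h1, EReal.mul_top_of_pos (by exact_mod_cast hs)]
              apply EReal.top_add_of_ne_bot
              intro hbot
              have h0 := mul_nonneg (show (0:EReal) ≤ (r:EReal) by exact_mod_cast hr.le)
                (klBernE_nonneg hy hl)
              rw [hbot] at h0
              simp at h0
            · have h1 : klBernE y l = ⊤ := by
                rw [klBernE, if_pos ⟨Or.inl hl0.symm, hne⟩]
              rw [h1, EReal.mul_top_of_pos (by exact_mod_cast hr)]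
              apply EReal.add_top_of_ne_bot
              intro hbot
              have h0 := mul_nonneg (show (0:EReal) ≤ (s:EReal) by exact_mod_cast hs.le)
                (klBernE_nonneg hx hl)
              rw [hbot] at h0
              simp at h0
          rw [htop]
          exact le_top
        · rcases eq_or_lt_of_le hl.2 with hl1 | hl1
          · -- l = 1 : RHS is ⊤
            have hne : x ≠ l ∨ y ≠ l := by
              by_contra h
              push_neg at h
              apply hm1
              rw [hm, h.1, h.2, hl1, mul_one, mul_one, div_self hsr.ne']
            have htop : (s : EReal) * klBernE x l + (r : EReal) * klBernE y l = ⊤ := by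
              rcases hne with hne | hne
              · have h1 : klBernE x l = ⊤ := by
                  rw [klBernE, if_pos ⟨Or.inr hl1, hne⟩]
                rw [h1, EReal.mul_top_of_pos (by exact_mod_cast hs)]
                apply EReal.top_add_of_ne_bot
                intro hbot
                have h0 := mul_nonneg (show (0:EReal) ≤ (r:EReal) by exact_mod_cast hr.le)
                  (klBernE_nonneg hy hl)
                rw [hbot] at h0
                simp at h0
              · have h1 : klBernE y l = ⊤ := by
                  rw [klBernE, if_pos ⟨Or.inr hl1, hne⟩]
                rw [h1, EReal.mul_top_of_pos (by exact_mod_cast hr)]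
                apply EReal.add_top_of_ne_bot
                intro hbot
                have h0 := mul_nonneg (show (0:EReal) ≤ (s:EReal) by exact_mod_cast hs.le)
                  (klBernE_nonneg hx hl)
                rw [hbot] at h0
                simp at h0
            rw [htop]
            exact le_top
          · -- l ∈ Ioo 0 1 : use the identity
            have hlIoo : l ∈ Set.Ioo (0:ℝ) 1 := ⟨hl0, hl1⟩
            have hRHS : (s : EReal) * klBernE x l + (r : EReal) * klBernE y l
                = (((s * klR x l + r * klR y l : ℝ)) : EReal) := by
              rw [klBernE_of_Ioo hlIoo, klBernE_of_Ioo hlIoo, EReal.coe_add,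
                EReal.coe_mul, EReal.coe_mul]
            rw [hRHS, EReal.coe_le_coe_iff,
              klR_identity hx hy hs hr hm hmIoo hlIoo]
            nlinarith [klR_nonneg (Set.Ioo_subset_Icc_self hmIoo) hlIoo]
  · exact iInf₂_le m hmIcc
end
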